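/- arXiv:1708.01049 — 2 statements merged into one kernel-verified Lean document; each statement's English description precedes it below -/
import Mathlib

section
/- For a smooth positive function u on ℝⁿ, if ∂ₜ u = Δ u then ∂ₜ(|∇u|²/u) - Δ(|∇u|²/u) = -2 |Hess(ln u)|² u holds pointwise. -/
open MeasureTheory Real

noncomputable def lap {n : ℕ} (f : EuclideanSpace ℝ (Fin n) → ℝ)
    (x : EuclideanSpace ℝ (Fin n)) : ℝ :=
  ∑ i, iteratedFDeriv ℝ 2 f x ![EuclideanSpace.single i 1, EuclideanSpace.single i 1]

/-- Squared Frobenius norm of the Hessian of `f` at `x`. -/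
noncomputable def hessNormSq {n : ℕ} (f : EuclideanSpace ℝ (Fin n) → ℝ)
    (x : EuclideanSpace ℝ (Fin n)) : ℝ :=
  ∑ i, ∑ j, (iteratedFDeriv ℝ 2 f x ![EuclideanSpace.single i 1, EuclideanSpace.single j 1]) ^ 2

namespace BochnerPDE

variable {E : Type*} [NormedAddCommGroup E] [NormedSpace ℝ E]

/-- Directional derivative operator. -/
noncomputable def D (v : E) (g : E → ℝ) : E → ℝ := fun p => fderiv ℝ g p v

lemma D_smooth (v : E) {g : E → ℝ} (hg : ContDiff ℝ (⊤ : ℕ∞) g) : ContDiff ℝ (⊤ : ℕ∞) (D v g) :=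
  (hg.fderiv_right (by simp)).clm_apply contDiff_const

lemma D_sub {g h : E → ℝ} {q : E} (hg : DifferentiableAt ℝ g q)
    (hh : DifferentiableAt ℝ h q) (v : E) :
    D v (fun p => g p - h p) q = D v g q - D v h q := by
  simp [D, fderiv_fun_sub hg hh]

lemma D_mul {g h : E → ℝ} {q : E} (hg : DifferentiableAt ℝ g q)
    (hh : DifferentiableAt ℝ h q) (v : E) :
    D v (fun p => g p * h p) q = g q * D v h q + h q * D v g q := by
  simp [D, fderiv_fun_mul hg hh]

lemma D_const_mul {g : E → ℝ} {q : E} (hg : DifferentiableAt ℝ g q) (c : ℝ) (v : E) :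
    D v (fun p => c * g p) q = c * D v g q := by
  simp [D, fderiv_const_mul hg]

lemma D_sq {g : E → ℝ} {q : E} (hg : DifferentiableAt ℝ g q) (v : E) :
    D v (fun p => g p ^ 2) q = 2 * g q * D v g q := by
  have : (fun p => g p ^ 2) = fun p => g p * g p := by funext p; ring
  rw [this, D_mul hg hg]; ring

lemma D_sum {ι : Type*} {s : Finset ι} {g : ι → E → ℝ} {q : E}
    (hg : ∀ i ∈ s, DifferentiableAt ℝ (g i) q) (v : E) :
    D v (fun p => ∑ i ∈ s, g i p) q = ∑ i ∈ s, D v (g i) q := by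
  simp [D, fderiv_fun_sum hg]

lemma D_inv {g : E → ℝ} {q : E} (hg : DifferentiableAt ℝ g q) (hq : g q ≠ 0) (v : E) :
    D v (fun p => (g p)⁻¹) q = -(D v g q) / g q ^ 2 := by
  have h : HasFDerivAt (fun p => (g p)⁻¹) (-(g q ^ 2)⁻¹ • fderiv ℝ g q) q :=
    (hasDerivAt_inv hq).comp_hasFDerivAt q hg.hasFDerivAt
  simp only [D, h.fderiv, ContinuousLinearMap.smul_apply, smul_eq_mul]
  ring

lemma D_div {g h : E → ℝ} {q : E} (hg : DifferentiableAt ℝ g q)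
    (hh : DifferentiableAt ℝ h q) (hq : h q ≠ 0) (v : E) :
    D v (fun p => g p / h p) q = (D v g q * h q - g q * D v h q) / h q ^ 2 := by
  have : (fun p => g p / h p) = fun p => g p * (h p)⁻¹ := by
    funext p; rw [div_eq_mul_inv]
  rw [this, D_mul hg (hh.fun_inv hq), D_inv hh hq]
  field_simp
  ring

lemma D_log {g : E → ℝ} {q : E} (hg : DifferentiableAt ℝ g q) (hq : g q ≠ 0) (v : E) :
    D v (fun p => Real.log (g p)) q = D v g q / g q := by
  have h : HasFDerivAt (fun p => Real.log (g p)) ((g q)⁻¹ • fderiv ℝ g q) q :=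
    (Real.hasDerivAt_log hq).comp_hasFDerivAt q hg.hasFDerivAt
  simp only [D, h.fderiv, ContinuousLinearMap.smul_apply, smul_eq_mul]
  ring

lemma D_fderiv2 {g : E → ℝ} (hg : ContDiff ℝ (⊤ : ℕ∞) g) (q : E) (a b : E) :
    fderiv ℝ (fderiv ℝ g) q a b = D a (D b g) q := by
  have hd2 : Differentiable ℝ (fderiv ℝ g) := (hg.fderiv_right (m := (⊤ : ℕ∞)) (by simp)).differentiable (by simp)
  have hcomp : HasFDerivAt (fun p => (ContinuousLinearMap.apply ℝ ℝ b) (fderiv ℝ g p))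
      ((ContinuousLinearMap.apply ℝ ℝ b).comp (fderiv ℝ (fderiv ℝ g) q)) q :=
    (ContinuousLinearMap.apply ℝ ℝ b).hasFDerivAt.comp q (hd2 q).hasFDerivAt
  have heq : D a (D b g) q = ((ContinuousLinearMap.apply ℝ ℝ b).comp
      (fderiv ℝ (fderiv ℝ g) q)) a := by
    show fderiv ℝ (fun p => (ContinuousLinearMap.apply ℝ ℝ b) (fderiv ℝ g p)) q a = _
    rw [hcomp.fderiv]
  rw [heq]
  rfl

lemma D_comm {g : E → ℝ} (hg : ContDiff ℝ (⊤ : ℕ∞) g) (v w : E) (q : E) :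
    D v (D w g) q = D w (D v g) q := by
  rw [← D_fderiv2 hg, ← D_fderiv2 hg]
  exact second_derivative_symmetric
    (fun y => ((hg.differentiable (by simp)) y).hasFDerivAt)
    (((hg.fderiv_right (m := (⊤ : ℕ∞)) (by simp)).differentiable (by simp) q).hasFDerivAt) v w

variable {F' : Type*} [NormedAddCommGroup F'] [NormedSpace ℝ F']

lemma slice_smooth {g : ℝ × F' → ℝ} (hg : ContDiff ℝ (⊤ : ℕ∞) g) (t : ℝ) :
    ContDiff ℝ (⊤ : ℕ∞) (fun y => g (t, y)) :=
  hg.comp (contDiff_const.prodMk contDiff_id)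

lemma slice_fderiv {g : ℝ × F' → ℝ} (hg : Differentiable ℝ g) (t : ℝ) (x v : F') :
    fderiv ℝ (fun y => g (t, y)) x v = fderiv ℝ g (t, x) (0, v) := by
  have h1 : HasFDerivAt (fun y : F' => ((t, y) : ℝ × F'))
      ((0 : F' →L[ℝ] ℝ).prod (ContinuousLinearMap.id ℝ F')) x :=
    (hasFDerivAt_const t x).prodMk (hasFDerivAt_id x)
  have h2 := ((hg (t, x)).hasFDerivAt.comp x h1).fderiv
  rw [show (fun y => g (t, y)) = g ∘ (fun y => (t, y)) from rfl, h2]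
  rfl

lemma slice_deriv {g : ℝ × F' → ℝ} (hg : Differentiable ℝ g) (t : ℝ) (x : F') :
    deriv (fun s => g (s, x)) t = fderiv ℝ g (t, x) (1, 0) := by
  have h1 : HasDerivAt (fun s : ℝ => ((s, x) : ℝ × F')) ((1 : ℝ), (0 : F')) t :=
    (hasDerivAt_id t).prodMk (hasDerivAt_const t x)
  exact ((hg (t, x)).hasFDerivAt.comp_hasDerivAt t h1).deriv

lemma slice_second {g : ℝ × F' → ℝ} (hg : ContDiff ℝ (⊤ : ℕ∞) g) (t : ℝ) (x : F') (a b : F') :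
    iteratedFDeriv ℝ 2 (fun y => g (t, y)) x ![a, b]
      = D ((0 : ℝ), a) (D ((0 : ℝ), b) g) (t, x) := by
  rw [iteratedFDeriv_two_apply]
  simp only [Matrix.cons_val_zero, Matrix.cons_val_one, Matrix.head_cons]
  rw [D_fderiv2 (slice_smooth hg t) x a b]
  have h1 : D b (fun y => g (t, y)) = fun y => (D ((0 : ℝ), b) g) (t, y) :=
    funext fun y => slice_fderiv (hg.differentiable (by simp)) t y b
  rw [h1]
  exact slice_fderiv ((D_smooth _ hg).differentiable (by simp)) t x a

noncomputable def ee (n : ℕ) (i : Fin n) : ℝ × EuclideanSpace ℝ (Fin n) :=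
  ((0 : ℝ), EuclideanSpace.single i 1)

noncomputable def tt (n : ℕ) : ℝ × EuclideanSpace ℝ (Fin n) := ((1 : ℝ), 0)

lemma lap_slice {n : ℕ} {g : ℝ × EuclideanSpace ℝ (Fin n) → ℝ} (hg : ContDiff ℝ (⊤ : ℕ∞) g)
    (t : ℝ) (x : EuclideanSpace ℝ (Fin n)) :
    lap (fun y => g (t, y)) x = ∑ i, D (ee n i) (D (ee n i) g) (t, x) := by
  unfold lap
  exact Finset.sum_congr rfl fun i _ => slice_second hg t x _ _

lemma hess_slice {n : ℕ} {g : ℝ × EuclideanSpace ℝ (Fin n) → ℝ} (hg : ContDiff ℝ (⊤ : ℕ∞) g)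
    (t : ℝ) (x : EuclideanSpace ℝ (Fin n)) :
    hessNormSq (fun y => g (t, y)) x
      = ∑ i, ∑ j, (D (ee n i) (D (ee n j) g) (t, x)) ^ 2 := by
  unfold hessNormSq
  exact Finset.sum_congr rfl fun i _ => Finset.sum_congr rfl fun j _ => by
    rw [slice_second hg t x _ _]; rfl

lemma grad_norm_sq {n : ℕ} {f : EuclideanSpace ℝ (Fin n) → ℝ} (x : EuclideanSpace ℝ (Fin n)) :
    ‖gradient f x‖ ^ 2 = ∑ i, (fderiv ℝ f x (EuclideanSpace.single i 1)) ^ 2 := by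
  have h : ∀ i, gradient f x i = fderiv ℝ f x (EuclideanSpace.single i 1) := by
    intro i
    have := EuclideanSpace.inner_single_right (𝕜 := ℝ) i (1 : ℝ) (gradient f x)
    rw [gradient, InnerProductSpace.toDual_symm_apply] at this
    simpa [gradient] using this.symm
  rw [EuclideanSpace.norm_eq, Real.sq_sqrt (by positivity)]
  exact Finset.sum_congr rfl fun i _ => by rw [h i, Real.norm_eq_abs, sq_abs]

lemma final_algebra {n : ℕ} {f : ℝ} (hf : f ≠ 0) (a : Fin n → ℝ) (B M : Fin n → Fin n → ℝ) :
    ((∑ i, 2 * a i * (∑ j, M j i)) * f - (∑ i, a i ^ 2) * (∑ j, B j j)) / f ^ 2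
      - ∑ j, (((∑ i, 2 * a i * B j i) * a j
              + f * (∑ i, (2 * a i * M j i + B j i * (2 * B j i)))
            - ((∑ i, a i ^ 2) * B j j + a j * (∑ i, 2 * a i * B j i))) * f ^ 2
          - ((∑ i, 2 * a i * B j i) * f - (∑ i, a i ^ 2) * a j) * (2 * f * a j)) / (f ^ 2) ^ 2
      = -2 * (∑ i, ∑ j, ((B i j * f - a j * a i) / f ^ 2) ^ 2) * f := by
  set σ : ℝ := ∑ i, a i ^ 2 with hσ
  have hLS : ∀ j : Fin n,
      (((∑ i, 2 * a i * B j i) * a j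
              + f * (∑ i, (2 * a i * M j i + B j i * (2 * B j i)))
            - (σ * B j j + a j * (∑ i, 2 * a i * B j i))) * f ^ 2
          - ((∑ i, 2 * a i * B j i) * f - σ * a j) * (2 * f * a j)) / (f ^ 2) ^ 2
        = (∑ i, 2 * a i * M j i) / f + (∑ i, B j i * (2 * B j i)) / f
            - σ * B j j / f ^ 2 - 2 * a j * (∑ i, 2 * a i * B j i) / f ^ 2
            + 2 * σ * a j ^ 2 / f ^ 3 := by
    intro j
    rw [Finset.sum_add_distrib]
    field_simp
    ring
  rw [Finset.sum_congr rfl fun j _ => hLS j]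
  rw [Finset.sum_add_distrib, Finset.sum_sub_distrib, Finset.sum_sub_distrib,
    Finset.sum_add_distrib]
  have hW : ∑ j : Fin n, (∑ i, 2 * a i * M j i) / f = (∑ i, 2 * a i * (∑ j, M j i)) / f := by
    rw [← Finset.sum_div]
    congr 1
    rw [Finset.sum_comm]
    exact Finset.sum_congr rfl fun i _ => (Finset.mul_sum _ _ _).symm
  have hQ : ∑ j : Fin n, (∑ i, B j i * (2 * B j i)) / f
      = 2 * (∑ j : Fin n, ∑ i, B j i * B j i) / f := by
    rw [← Finset.sum_div]
    congr 1
    rw [Finset.mul_sum]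
    exact Finset.sum_congr rfl fun j _ => by
      rw [Finset.mul_sum]
      exact Finset.sum_congr rfl fun i _ => by ring
  have hB : ∑ j : Fin n, σ * B j j / f ^ 2 = σ * (∑ j, B j j) / f ^ 2 := by
    rw [← Finset.sum_div, ← Finset.mul_sum]
  have hT : ∑ j : Fin n, 2 * a j * (∑ i, 2 * a i * B j i) / f ^ 2
      = 4 * (∑ j : Fin n, ∑ i, a j * a i * B j i) / f ^ 2 := by
    rw [← Finset.sum_div]
    congr 1
    rw [Finset.mul_sum]
    exact Finset.sum_congr rfl fun j _ => by
      rw [Finset.mul_sum, Finset.mul_sum]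
      exact Finset.sum_congr rfl fun i _ => by ring
  have hS2 : ∑ j : Fin n, 2 * σ * a j ^ 2 / f ^ 3 = 2 * σ ^ 2 / f ^ 3 := by
    rw [← Finset.sum_div, ← Finset.mul_sum, hσ, sq]; ring
  rw [hW, hQ, hB, hT, hS2]
  have hR : ∑ i : Fin n, ∑ j : Fin n, ((B i j * f - a j * a i) / f ^ 2) ^ 2
      = (∑ i : Fin n, ∑ j, B i j * B i j) / f ^ 2
        - 2 * (∑ i : Fin n, ∑ j, a i * a j * B i j) / f ^ 3
        + σ ^ 2 / f ^ 4 := by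
    have h1 : ∀ i j : Fin n, ((B i j * f - a j * a i) / f ^ 2) ^ 2
        = B i j * B i j / f ^ 2 - 2 * (a i * a j * B i j) / f ^ 3 + a i ^ 2 * a j ^ 2 / f ^ 4 := by
      intro i j
      field_simp
      ring
    simp only [h1]
    rw [show σ ^ 2 = ∑ i : Fin n, ∑ j, a i ^ 2 * a j ^ 2 by
      rw [sq, hσ, Finset.sum_mul_sum]]
    rw [Finset.sum_div (f := fun i => ∑ j, B i j * B i j)]
    simp only [Finset.sum_add_distrib, Finset.sum_sub_distrib, Finset.sum_div, Finset.mul_sum]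
  rw [hR]
  have hQQ : (∑ i : Fin n, ∑ j, B i j * B i j) = ∑ j : Fin n, ∑ i, B j i * B j i := rfl
  have hVV : (∑ i : Fin n, ∑ j, a i * a j * B i j) = ∑ j : Fin n, ∑ i, a j * a i * B j i := rfl
  rw [hQQ, hVV]
  field_simp
  ring

lemma main_identity {n : ℕ} {F : ℝ × EuclideanSpace ℝ (Fin n) → ℝ}
    (hF : ContDiff ℝ (⊤ : ℕ∞) F) (hpos : ∀ p, 0 < F p)
    (hheat : D (tt n) F = fun p => ∑ j, D (ee n j) (D (ee n j) F) p)
    (p : ℝ × EuclideanSpace ℝ (Fin n)) :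
    D (tt n) (fun q => (∑ i, D (ee n i) F q ^ 2) / F q) p
      - ∑ j, D (ee n j) (D (ee n j) (fun q => (∑ i, D (ee n i) F q ^ 2) / F q)) p
      = -2 * (∑ i, ∑ j, (D (ee n i) (D (ee n j) (fun q => Real.log (F q))) p) ^ 2) * F p := by
  have hFd : Differentiable ℝ F := hF.differentiable (by simp)
  have hne : ∀ q, F q ≠ 0 := fun q => (hpos q).ne'
  have hD1 : ∀ v : ℝ × EuclideanSpace ℝ (Fin n), ContDiff ℝ (⊤ : ℕ∞) (D v F) :=
    fun v => D_smooth v hF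
  have hD2 : ∀ v w : ℝ × EuclideanSpace ℝ (Fin n), ContDiff ℝ (⊤ : ℕ∞) (D v (D w F)) :=
    fun v w => D_smooth v (D_smooth w hF)
  have hS : ContDiff ℝ (⊤ : ℕ∞) (fun q => ∑ i, D (ee n i) F q ^ 2) :=
    ContDiff.sum fun i _ => (hD1 _).pow 2
  have hAc : ∀ v : ℝ × EuclideanSpace ℝ (Fin n),
      ContDiff ℝ (⊤ : ℕ∞) (fun q => ∑ i, 2 * D (ee n i) F q * D v (D (ee n i) F) q) :=
    fun v => ContDiff.sum fun i _ => (contDiff_const.mul (hD1 _)).mul (D_smooth _ (hD1 _))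
  have hdS : ∀ (v : ℝ × EuclideanSpace ℝ (Fin n)) q,
      D v (fun q => ∑ i, D (ee n i) F q ^ 2) q
        = ∑ i, 2 * D (ee n i) F q * D v (D (ee n i) F) q := by
    intro v q
    rw [D_sum (fun i _ => ((hD1 (ee n i)).differentiable (by simp) q).fun_pow 2) v]
    exact Finset.sum_congr rfl fun i _ => D_sq ((hD1 _).differentiable (by simp) q) v
  have hdP : ∀ (v : ℝ × EuclideanSpace ℝ (Fin n)) q,
      D v (fun q => (∑ i, D (ee n i) F q ^ 2) / F q) q
        = ((∑ i, 2 * D (ee n i) F q * D v (D (ee n i) F) q) * F q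
            - (∑ i, D (ee n i) F q ^ 2) * D v F q) / F q ^ 2 := by
    intro v q
    rw [D_div (hS.differentiable (by simp) q) (hFd q) (hne q) v, hdS v q]
  have hdPfun : ∀ v : ℝ × EuclideanSpace ℝ (Fin n),
      D v (fun q => (∑ i, D (ee n i) F q ^ 2) / F q)
        = fun q => ((∑ i, 2 * D (ee n i) F q * D v (D (ee n i) F) q) * F q
            - (∑ i, D (ee n i) F q ^ 2) * D v F q) / F q ^ 2 :=
    fun v => funext (hdP v)
  have hdA : ∀ j : Fin n,
      D (ee n j) (fun q => ∑ i, 2 * D (ee n i) F q * D (ee n j) (D (ee n i) F) q) p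
        = ∑ i, (2 * D (ee n i) F p * D (ee n j) (D (ee n j) (D (ee n i) F)) p
            + D (ee n j) (D (ee n i) F) p * (2 * D (ee n j) (D (ee n i) F) p)) := by
    intro j
    rw [D_sum (fun i _ =>
      ((contDiff_const.mul (hD1 _)).mul (hD2 _ _)).differentiable (by simp) p) (ee n j)]
    refine Finset.sum_congr rfl fun i _ => ?_
    rw [D_mul ((contDiff_const.mul (hD1 (ee n i))).differentiable (by simp) p)
      ((hD2 (ee n j) (ee n i)).differentiable (by simp) p) (ee n j)]
    rw [D_const_mul ((hD1 (ee n i)).differentiable (by simp) p) 2 (ee n j)]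
  have hdd : ∀ j : Fin n,
      D (ee n j) (D (ee n j) (fun q => (∑ i, D (ee n i) F q ^ 2) / F q)) p
        = (((∑ i, 2 * D (ee n i) F p * D (ee n j) (D (ee n i) F) p) * D (ee n j) F p
              + F p * (∑ i, (2 * D (ee n i) F p * D (ee n j) (D (ee n j) (D (ee n i) F)) p
                  + D (ee n j) (D (ee n i) F) p * (2 * D (ee n j) (D (ee n i) F) p)))
            - ((∑ i, D (ee n i) F p ^ 2) * D (ee n j) (D (ee n j) F) p
              + D (ee n j) F p * (∑ i, 2 * D (ee n i) F p * D (ee n j) (D (ee n i) F) p)))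
              * F p ^ 2
          - ((∑ i, 2 * D (ee n i) F p * D (ee n j) (D (ee n i) F) p) * F p
              - (∑ i, D (ee n i) F p ^ 2) * D (ee n j) F p) * (2 * F p * D (ee n j) F p))
          / (F p ^ 2) ^ 2 := by
    intro j
    rw [hdPfun (ee n j)]
    rw [D_div ((((hAc (ee n j)).mul hF).sub (hS.mul (hD1 (ee n j)))).differentiable (by simp) p)
      ((hF.pow 2).differentiable (by simp) p) (pow_ne_zero 2 (hne p)) (ee n j)]
    rw [D_sq (hFd p) (ee n j)]
    rw [D_sub (((hAc (ee n j)).mul hF).differentiable (by simp) p)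
      ((hS.mul (hD1 (ee n j))).differentiable (by simp) p) (ee n j)]
    rw [D_mul ((hAc (ee n j)).differentiable (by simp) p) (hFd p) (ee n j)]
    rw [D_mul (hS.differentiable (by simp) p) ((hD1 (ee n j)).differentiable (by simp) p) (ee n j)]
    rw [hdS (ee n j) p, hdA j]
  have hc : ∀ i : Fin n, D (tt n) (D (ee n i) F) p
      = ∑ j, D (ee n j) (D (ee n j) (D (ee n i) F)) p := by
    intro i
    rw [D_comm hF (tt n) (ee n i) p, hheat]
    rw [D_sum (fun j _ => (hD2 (ee n j) (ee n j)).differentiable (by simp) p) (ee n i)]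
    refine Finset.sum_congr rfl fun j _ => ?_
    rw [D_comm (D_smooth (ee n j) hF) (ee n i) (ee n j) p]
    congr 1
    exact funext fun q => D_comm hF (ee n i) (ee n j) q
  have hRHS : ∀ i j : Fin n,
      D (ee n i) (D (ee n j) (fun q => Real.log (F q))) p
        = (D (ee n i) (D (ee n j) F) p * F p - D (ee n j) F p * D (ee n i) F p) / F p ^ 2 := by
    intro i j
    rw [show D (ee n j) (fun q => Real.log (F q)) = fun q => D (ee n j) F q / F q from
      funext fun q => D_log (hFd q) (hne q) (ee n j)]
    rw [D_div ((hD1 (ee n j)).differentiable (by simp) p) (hFd p) (hne p) (ee n i)]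
  rw [hdP (tt n) p]
  simp only [hc]
  rw [show D (tt n) F p = ∑ j, D (ee n j) (D (ee n j) F) p from by rw [hheat]]
  simp only [hdd, hRHS]
  exact final_algebra (hne p) (fun k => D (ee n k) F p)
    (fun i j => D (ee n i) (D (ee n j) F) p)
    (fun j i => D (ee n j) (D (ee n j) (D (ee n i) F)) p)

end BochnerPDE

/-- Bochner-type identity: if `∂ₜ u = Δ u` (flat metric, Ricci term vanishes), then
`∂ₜ(|∇u|²/u) - Δ(|∇u|²/u) = -2 |Hess ln u|² u` pointwise. -/
theorem bochner_heat_identity {n : ℕ} (u : ℝ → EuclideanSpace ℝ (Fin n) → ℝ)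
    (hsm : ContDiff ℝ (⊤ : ℕ∞) (Function.uncurry u))
    (hpos : ∀ t x, 0 < u t x)
    (hheat : ∀ t x, deriv (fun s => u s x) t = lap (u t) x)
    (t : ℝ) (x : EuclideanSpace ℝ (Fin n)) :
    deriv (fun s => ‖gradient (u s) x‖ ^ 2 / u s x) t
      - lap (fun y => ‖gradient (u t) y‖ ^ 2 / u t y) x
      = -2 * hessNormSq (fun y => Real.log (u t y)) x * u t x := by
  classical
  set F : ℝ × EuclideanSpace ℝ (Fin n) → ℝ := Function.uncurry u with hFdef
  have hF : ContDiff ℝ (⊤ : ℕ∞) F := hsm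
  have hFd : Differentiable ℝ F := hF.differentiable (by simp)
  have hFpos : ∀ p, 0 < F p := fun p => hpos p.1 p.2
  have hne : ∀ q, F q ≠ 0 := fun q => (hFpos q).ne'
  have hS : ContDiff ℝ (⊤ : ℕ∞) (fun q => ∑ i, BochnerPDE.D (BochnerPDE.ee n i) F q ^ 2) :=
    ContDiff.sum fun i _ => (BochnerPDE.D_smooth _ hF).pow 2
  have hP : ContDiff ℝ (⊤ : ℕ∞) (fun q => (∑ i, BochnerPDE.D (BochnerPDE.ee n i) F q ^ 2) / F q) :=
    hS.div hF hne
  have hG : ContDiff ℝ (⊤ : ℕ∞) (fun q => Real.log (F q)) := hF.log hne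
  -- gradient squared norm as a function on the product space
  have hgrad : ∀ (s : ℝ) (y : EuclideanSpace ℝ (Fin n)),
      ‖gradient (u s) y‖ ^ 2 = ∑ i, BochnerPDE.D (BochnerPDE.ee n i) F (s, y) ^ 2 := by
    intro s y
    rw [BochnerPDE.grad_norm_sq]
    refine Finset.sum_congr rfl fun i _ => ?_
    congr 1
    exact BochnerPDE.slice_fderiv hFd s y (EuclideanSpace.single i 1)
  -- heat equation, function form
  have hheatF : BochnerPDE.D (BochnerPDE.tt n) F
      = fun p => ∑ j, BochnerPDE.D (BochnerPDE.ee n j) (BochnerPDE.D (BochnerPDE.ee n j) F) p := by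
    funext p
    obtain ⟨s, y⟩ := p
    have h1 : BochnerPDE.D (BochnerPDE.tt n) F (s, y) = deriv (fun r => u r y) s :=
      (BochnerPDE.slice_deriv hFd s y).symm
    have h2 : lap (u s) y
        = ∑ j, BochnerPDE.D (BochnerPDE.ee n j) (BochnerPDE.D (BochnerPDE.ee n j) F) (s, y) :=
      BochnerPDE.lap_slice hF s y
    rw [h1, hheat s y, h2]
  -- the three pieces of the statement
  have e1 : deriv (fun s => ‖gradient (u s) x‖ ^ 2 / u s x) t
      = BochnerPDE.D (BochnerPDE.tt n)
          (fun q => (∑ i, BochnerPDE.D (BochnerPDE.ee n i) F q ^ 2) / F q) (t, x) := by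
    have : (fun s => ‖gradient (u s) x‖ ^ 2 / u s x)
        = fun s => (fun q => (∑ i, BochnerPDE.D (BochnerPDE.ee n i) F q ^ 2) / F q) (s, x) := by
      funext s
      rw [hgrad s x]; rfl
    rw [this]
    exact BochnerPDE.slice_deriv (hP.differentiable (by simp)) t x
  have e2 : lap (fun y => ‖gradient (u t) y‖ ^ 2 / u t y) x
      = ∑ j, BochnerPDE.D (BochnerPDE.ee n j) (BochnerPDE.D (BochnerPDE.ee n j)
          (fun q => (∑ i, BochnerPDE.D (BochnerPDE.ee n i) F q ^ 2) / F q)) (t, x) := by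
    have : (fun y => ‖gradient (u t) y‖ ^ 2 / u t y)
        = fun y => (fun q => (∑ i, BochnerPDE.D (BochnerPDE.ee n i) F q ^ 2) / F q) (t, y) := by
      funext y
      rw [hgrad t y]; rfl
    rw [this]
    exact BochnerPDE.lap_slice hP t x
  have e3 : hessNormSq (fun y => Real.log (u t y)) x
      = ∑ i, ∑ j, (BochnerPDE.D (BochnerPDE.ee n i) (BochnerPDE.D (BochnerPDE.ee n j)
          (fun q => Real.log (F q))) (t, x)) ^ 2 := by
    have : (fun y => Real.log (u t y)) = fun y => (fun q => Real.log (F q)) (t, y) := rfl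
    rw [this]
    exact BochnerPDE.hess_slice hG t x
  rw [e1, e2, e3]
  exact BochnerPDE.main_identity hF hFpos hheatF (t, x)
end

section
/- If v : ℝⁿ → ℝ satisfies 0 < v(x) ≤ C₁ e^{-C₂|x|²} and u(x,t) = ∫ p(x,t;y,1) v²(y) dy where the kernel satisfies p(x,t;y,1) ≤ c₃ (1-t)^{-n/2} e^{-c₄|x-y|²/(1-t)}, then u(x,t) ≤ c₅ e^{-c₆|x|²} for all t ∈ [0,1), with constants c₅, c₆ depending only on n, C₁, C₂, c₃, c₄. -/
open MeasureTheory Real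

lemma integrable_gauss_aux {n : ℕ} {b : ℝ} (hb : 0 < b) :
    Integrable (fun y : EuclideanSpace ℝ (Fin n) ↦ Real.exp (-b * ‖y‖^2)) := by
  have h := (GaussianFourier.integrable_cexp_neg_mul_sq_norm_add (b:=(b:ℂ)) (by simpa using hb) 0
    (0 : EuclideanSpace ℝ (Fin n))).norm
  simpa [Complex.norm_exp, ← Complex.ofReal_pow] using h

lemma integral_gauss_aux {n : ℕ} {b : ℝ} (hb : 0 < b) :
    ∫ y : EuclideanSpace ℝ (Fin n), Real.exp (-b * ‖y‖^2) = (π/b)^((n:ℝ)/2) := by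
  rw [GaussianFourier.integral_rexp_neg_mul_sq_norm hb]
  simp

lemma gauss_quad_aux {c₄ b α P Q R : ℝ} (hc₄ : 0 < c₄) (hb : 0 < b) (hP : 0 ≤ P)
    (hQ : 0 ≤ Q) (hR2 : R^2 ≤ (P+Q)^2) (hαge : c₄/2 ≤ α) :
    (c₄*b/(c₄+2*b)) * R^2 ≤ α * P^2 + b * Q^2 := by
  have h : 0 < c₄ + 2*b := by linarith
  rw [div_mul_eq_mul_div, div_le_iff₀ h]
  nlinarith [sq_nonneg (c₄*P - 2*b*Q),
    mul_nonneg (mul_nonneg (sub_nonneg.mpr hαge) (sq_nonneg P)) h.le,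
    mul_le_mul_of_nonneg_left hR2 (by positivity : (0:ℝ) ≤ c₄ * b)]

set_option maxHeartbeats 1000000 in
/-- Gaussian-convolution estimate: if `0 < v ≤ C₁ e^{-C₂|x|²}` and the kernel satisfies
`0 ≤ p(x,t;y,1) ≤ c₃(1-t)^{-n/2} e^{-c₄|x-y|²/(1-t)}`, then
`u(x,t) = ∫ p(x,t;y,1) v(y)² dy` satisfies `u(x,t) ≤ c₅ e^{-c₆|x|²}` uniformly in `t ∈ [0,1)`. -/
theorem gaussian_convolution_decay (n : ℕ) (C₁ C₂ c₃ c₄ : ℝ)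
    (hC₁ : 0 < C₁) (hC₂ : 0 < C₂) (hc₃ : 0 < c₃) (hc₄ : 0 < c₄)
    (v : EuclideanSpace ℝ (Fin n) → ℝ)
    (hv : ∀ x, 0 < v x ∧ v x ≤ C₁ * Real.exp (-C₂ * ‖x‖ ^ 2))
    (p : EuclideanSpace ℝ (Fin n) → ℝ → EuclideanSpace ℝ (Fin n) → ℝ)
    (hp0 : ∀ x t y, 0 ≤ p x t y)
    (hp : ∀ x : EuclideanSpace ℝ (Fin n), ∀ t ∈ Set.Ico (0:ℝ) 1, ∀ y,
      p x t y ≤ c₃ * (1 - t) ^ (-(n : ℝ) / 2) * Real.exp (-c₄ * ‖x - y‖ ^ 2 / (1 - t))) :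
    ∃ c₅ > (0:ℝ), ∃ c₆ > (0:ℝ), ∀ x : EuclideanSpace ℝ (Fin n), ∀ t ∈ Set.Ico (0:ℝ) 1,
      (∫ y, p x t y * v y ^ 2) ≤ c₅ * Real.exp (-c₆ * ‖x‖ ^ 2) := by
  set b : ℝ := 2 * C₂ with hbdef
  have hb : 0 < b := by positivity
  refine ⟨c₃ * C₁^2 * (2*π/c₄)^((n:ℝ)/2), by positivity, c₄*b/(c₄+2*b), by positivity, ?_⟩
  intro x t ht
  obtain ⟨ht0, ht1⟩ := ht
  have h1 := fun y => hp x t ⟨ht0, ht1⟩ y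
  set s : ℝ := 1 - t with hsdef
  have hs : 0 < s := by simp only [hsdef]; linarith
  have hs1 : s ≤ 1 := by simp only [hsdef]; linarith
  set c₆ : ℝ := c₄*b/(c₄+2*b) with hc6def
  have hc6 : 0 < c₆ := by positivity
  set α : ℝ := c₄/(2*s) with hαdef
  have hα : 0 < α := by positivity
  set K : ℝ := c₃ * s ^ (-(n:ℝ)/2) * C₁^2 * Real.exp (-c₆ * ‖x‖^2) with hKdef
  have hspow : 0 < s ^ (-(n:ℝ)/2) := Real.rpow_pos_of_pos hs _
  have hK : 0 < K := by positivity
  clear_value b s c₆ α K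
  -- pointwise bound
  have key : ∀ y, p x t y * v y ^ 2 ≤ K * Real.exp (-α * ‖x - y‖^2) := by
    intro y
    have hvpos := (hv y).1
    have hvle := (hv y).2
    have hv2 : v y ^ 2 ≤ C₁^2 * Real.exp (-b * ‖y‖^2) := by
      calc v y ^ 2 ≤ (C₁ * Real.exp (-C₂ * ‖y‖^2))^2 :=
            pow_le_pow_left₀ hvpos.le hvle 2
        _ = C₁^2 * Real.exp (-b * ‖y‖^2) := by
            rw [mul_pow, ← Real.exp_nat_mul]
            norm_num
            left
            rw [hbdef]; ring
    have hstep1 : p x t y * v y ^ 2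
        ≤ (c₃ * s ^ (-(n:ℝ)/2) * Real.exp (-c₄ * ‖x - y‖ ^ 2 / s))
          * (C₁^2 * Real.exp (-b * ‖y‖^2)) := by
      apply mul_le_mul (h1 y) hv2 (by positivity) (by positivity)
    have hexp : -c₄ * ‖x - y‖ ^ 2 / s + (-b * ‖y‖^2) ≤ -c₆ * ‖x‖^2 + (-α * ‖x - y‖^2) := by
      have htri : ‖x‖ ≤ ‖x - y‖ + ‖y‖ := by
        calc ‖x‖ = ‖(x - y) + y‖ := by rw [sub_add_cancel]
          _ ≤ ‖x - y‖ + ‖y‖ := norm_add_le _ _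
      set P := ‖x - y‖; set Q := ‖y‖; set R := ‖x‖
      have hP : 0 ≤ P := norm_nonneg _
      have hQ : 0 ≤ Q := norm_nonneg _
      have hR : 0 ≤ R := norm_nonneg _
      clear_value P Q R
      have hR2 : R^2 ≤ (P + Q)^2 := by nlinarith
      have h2α : c₄ * P^2 / s = 2 * α * P^2 := by
        rw [hαdef]; field_simp
      have hαge : c₄ / 2 ≤ α := by
        rw [hαdef]
        rw [div_le_div_iff₀ (by norm_num) (by positivity)]
        nlinarith
      -- suffices: c₆ R² ≤ α P² + b Q², and then c₆ R² + α P² ≤ 2α P² + b Q²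
      have hkey : c₆ * R^2 ≤ α * P^2 + b * Q^2 := by
        rw [hc6def]
        exact gauss_quad_aux hc₄ hb hP hQ hR2 hαge
      have heq : -c₄ * P ^ 2 / s = -(2 * α * P^2) := by
        rw [← h2α]; ring
      rw [heq]
      linarith
    calc p x t y * v y ^ 2
        ≤ (c₃ * s ^ (-(n:ℝ)/2) * Real.exp (-c₄ * ‖x - y‖ ^ 2 / s))
          * (C₁^2 * Real.exp (-b * ‖y‖^2)) := hstep1
      _ = (c₃ * s ^ (-(n:ℝ)/2) * C₁^2) * Real.exp (-c₄ * ‖x - y‖ ^ 2 / s + (-b * ‖y‖^2)) := by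
          rw [Real.exp_add]; ring
      _ ≤ (c₃ * s ^ (-(n:ℝ)/2) * C₁^2) * Real.exp (-c₆ * ‖x‖^2 + (-α * ‖x - y‖^2)) := by
          apply mul_le_mul_of_nonneg_left (Real.exp_le_exp.mpr hexp) (by positivity)
      _ = K * Real.exp (-α * ‖x - y‖^2) := by
          rw [hKdef, Real.exp_add]; ring
  -- integrability of the bound
  have hint : Integrable (fun y : EuclideanSpace ℝ (Fin n) ↦ K * Real.exp (-α * ‖x - y‖^2)) := by
    apply Integrable.const_mul
    exact (integrable_comp_sub_left (fun y : EuclideanSpace ℝ (Fin n) ↦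
      Real.exp (-α * ‖y‖^2)) x).mpr (integrable_gauss_aux hα)
  -- integral comparison
  have hmono : (∫ y, p x t y * v y ^ 2) ≤ ∫ y, K * Real.exp (-α * ‖x - y‖^2) := by
    apply integral_mono_of_nonneg
    · exact Filter.Eventually.of_forall fun y => mul_nonneg (hp0 x t y) (sq_nonneg _)
    · exact hint
    · exact Filter.Eventually.of_forall key
  -- compute the integral of the bound
  have hval : (∫ y, K * Real.exp (-α * ‖x - y‖^2)) = K * (π/α)^((n:ℝ)/2) := by
    rw [integral_const_mul]
    congr 1
    rw [integral_sub_left_eq_self (fun y : EuclideanSpace ℝ (Fin n) ↦ Real.exp (-α * ‖y‖^2))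
      volume x]
    exact integral_gauss_aux hα
  -- final constant computation
  have hfinal : K * (π/α)^((n:ℝ)/2)
      = c₃ * C₁^2 * (2*π/c₄)^((n:ℝ)/2) * Real.exp (-c₆ * ‖x‖^2) := by
    have hπα : π/α = (2*π/c₄) * s := by
      rw [hαdef]; field_simp
    have hss : s ^ (-(n:ℝ)/2) * s ^ ((n:ℝ)/2) = 1 := by
      rw [← Real.rpow_add hs, show -(n:ℝ)/2 + (n:ℝ)/2 = 0 by ring, Real.rpow_zero]
    calc K * (π/α)^((n:ℝ)/2)
        = (c₃ * C₁^2 * ((2*π/c₄)^((n:ℝ)/2)) * Real.exp (-c₆ * ‖x‖^2))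
          * (s ^ (-(n:ℝ)/2) * s ^ ((n:ℝ)/2)) := by
          rw [hKdef, hπα, Real.mul_rpow (by positivity) hs.le]; ring
      _ = c₃ * C₁^2 * (2*π/c₄)^((n:ℝ)/2) * Real.exp (-c₆ * ‖x‖^2) := by
          rw [hss]; ring
  rw [hval, hfinal] at hmono
  exact hmono
end
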